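/- arXiv:2510.12933 — 2 statements merged into one kernel-verified Lean document; each statement's English description precedes it below -/
import Mathlib

section
/- For any p in (0, 1/32] and any real numbers φ, φ', we have |cos(φ)| · |cos(φ')| ≤ (1 - 2p + 2p·cos(2φ + 2φ'))². -/
theorem trig_comparison (p φ φ' : ℝ) (hp : 0 < p) (hp' : p ≤ 1/32) :
    |Real.cos φ| * |Real.cos φ'| ≤ (1 - 2*p + 2*p*Real.cos (2*φ + 2*φ'))^2 := by
  set c := Real.cos (φ + φ') with hc
  have hc1 : |c| ≤ 1 := Real.abs_cos_le_one _
  have hc0 : 0 ≤ |c| := abs_nonneg _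
  have hcsq : |c| ^ 2 = c ^ 2 := sq_abs c
  have hprod : Real.cos φ * Real.cos φ' = (Real.cos (φ - φ') + c) / 2 := by
    rw [hc, Real.cos_sub, Real.cos_add]; ring
  have key : |Real.cos φ| * |Real.cos φ'| ≤ (1 + |c|) / 2 := by
    rw [← abs_mul, hprod]
    have h1 : |Real.cos (φ - φ') + c| ≤ 1 + |c| :=
      (abs_add_le _ _).trans (by linarith [Real.abs_cos_le_one (φ - φ')])
    rw [abs_div, abs_of_nonneg (by norm_num : (0:ℝ) ≤ 2)]
    linarith
  have h2 : Real.cos (2*φ + 2*φ') = 2 * c ^ 2 - 1 := by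
    rw [hc, show 2*φ + 2*φ' = 2 * (φ + φ') by ring, Real.cos_two_mul]
  rw [h2]
  have : (1 + |c|) / 2 ≤ (1 - 2*p + 2*p*(2 * c ^ 2 - 1))^2 := by
    nlinarith [hcsq, mul_nonneg hp.le (sq_nonneg (1 - |c|)),
      mul_nonneg (by linarith : (0:ℝ) ≤ 1/32 - p) (sub_nonneg.2 hc1),
      sq_nonneg (2*p*(1 - c^2)), hc0, hc1]
  linarith
end

section
/- Let X₁,...,X_n be i.i.d. uniform on {±1}^n, let 1 ≤ k ≤ n, let p ∈ (0,1/2), and call an (n-k)-dimensional subspace V ⊆ Q^n thin if ρ_V := P[X₁ ∈ V] ≤ (1-p)^{n/2}. Then P[span(X₁,...,X_n) is an (n-k)-dimensional thin subspace] ≤ 2^n · (1-p)^{nk/2}. -/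
/-- A uniformly random vector in `{±1}^n`, encoded by independent uniform Boolean entries. -/
def signVec {n : ℕ} (b : Fin n → Bool) : Fin n → ℚ :=
  fun i => if b i then 1 else -1

/-- `ρ_V`: the probability that a uniformly random `{±1}^n` vector lies in `V`. -/
noncomputable def rho {n : ℕ} (V : Submodule ℚ (Fin n → ℚ)) : ℝ :=
  (Nat.card {b : Fin n → Bool // signVec b ∈ V} : ℝ) / 2 ^ n

open Finset

/-- The span of the rows indexed by `S`, as a function of those rows only. -/
noncomputable def spanOn {n : ℕ} (S : Finset (Fin n)) (f : {j // j ∈ S} → (Fin n → Bool)) :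
    Submodule ℚ (Fin n → ℚ) :=
  Submodule.span ℚ (Set.range fun j => signVec (f j))

lemma exists_spanning_finset {m W : Type*} [Fintype m] [DecidableEq m]
    [AddCommGroup W] [Module ℚ W] (v : m → W) :
    ∃ S : Finset m,
      S.card = Module.finrank ℚ (Submodule.span ℚ (Set.range v)) ∧
      Submodule.span ℚ (v '' ↑S) = Submodule.span ℚ (Set.range v) := by
  classical
  obtain ⟨t, hts, hspan, hind⟩ := exists_linearIndependent ℚ (Set.range v)
  have hfin : t.Finite := (Set.finite_range v).subset hts
  haveI : Fintype t := hfin.fintype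
  choose g hg using fun x : t => hts x.2
  have hginj : Function.Injective g := fun a b hab =>
    Subtype.ext (by rw [← hg a, ← hg b, hab])
  refine ⟨Finset.univ.image g, ?_, ?_⟩
  · rw [Finset.card_image_of_injective _ hginj, Finset.card_univ, ← hspan,
      finrank_span_set_eq_card hind, Set.toFinset_card]
  · have himg : v '' ↑(Finset.univ.image g) = t := by
      ext x
      constructor
      · rintro ⟨j, hj, rfl⟩
        simp only [Finset.coe_image, Finset.coe_univ, Set.image_univ, Set.mem_range] at hj
        obtain ⟨y, rfl⟩ := hj
        rw [hg y]; exact y.2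
      · intro hx
        exact ⟨g ⟨x, hx⟩, by simp, hg ⟨x, hx⟩⟩
    rw [himg, hspan]

lemma natCard_le_sum {α ι : Type*} [Fintype α] (F : Finset ι) (p : α → Prop)
    (q : ι → α → Prop) (h : ∀ x, p x → ∃ S ∈ F, q S x) :
    Nat.card {x // p x} ≤ ∑ S ∈ F, Nat.card {x // q S x} := by
  classical
  simp only [Nat.card_eq_fintype_card, Fintype.card_subtype]
  calc (Finset.univ.filter p).card
      ≤ (F.biUnion fun S => Finset.univ.filter (q S)).card := by
        apply Finset.card_le_card
        intro x hx
        simp only [Finset.mem_filter, Finset.mem_univ, true_and] at hx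
        obtain ⟨S, hSF, hq⟩ := h x hx
        exact Finset.mem_biUnion.2 ⟨S, hSF, by simp [hq]⟩
    _ ≤ ∑ S ∈ F, (Finset.univ.filter (q S)).card := Finset.card_biUnion_le

lemma countS (n k : ℕ) (hkn : k ≤ n) (p : ℝ) (hp1 : 0 ≤ 1 - p)
    (S : Finset (Fin n)) (hS : S.card = n - k) :
    (Nat.card {B : Fin n → Fin n → Bool //
        rho (spanOn S fun j => B j.1) ≤ (1 - p) ^ ((n : ℝ) / 2) ∧
        ∀ j : {j // ¬ j ∈ S}, signVec (B j.1) ∈ spanOn S fun i => B i.1} : ℝ)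
      ≤ 2 ^ (n * (n - k)) * ((1 - p) ^ ((n : ℝ) / 2) * 2 ^ n) ^ k := by
  classical
  have hMnonneg : (0:ℝ) ≤ ((1 - p) ^ ((n : ℝ) / 2) * 2 ^ n) ^ k := by positivity
  have hcardS : Fintype.card {j // j ∈ S} = n - k := by
    rw [Fintype.card_coe]; exact hS
  have hcardC : Fintype.card {j : Fin n // ¬ j ∈ S} = k := by
    rw [Fintype.card_subtype_compl, Fintype.card_fin, Fintype.card_coe, hS]
    omega
  have e0 : {x : ({j // j ∈ S} → (Fin n → Bool)) × ({j : Fin n // ¬ j ∈ S} → (Fin n → Bool)) //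
        (rho (spanOn S x.1) ≤ (1 - p) ^ ((n : ℝ) / 2) ∧
          ∀ j : {j : Fin n // ¬ j ∈ S}, signVec (x.2 j) ∈ spanOn S x.1)}
      ≃ Σ f : ({j // j ∈ S} → (Fin n → Bool)),
          {g : ({j : Fin n // ¬ j ∈ S} → (Fin n → Bool)) //
            rho (spanOn S f) ≤ (1 - p) ^ ((n : ℝ) / 2) ∧
            ∀ j : {j : Fin n // ¬ j ∈ S}, signVec (g j) ∈ spanOn S f} :=
    Equiv.subtypeProdEquivSigmaSubtype
      (fun (f : {j // j ∈ S} → (Fin n → Bool))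
           (g : {j : Fin n // ¬ j ∈ S} → (Fin n → Bool)) =>
        rho (spanOn S f) ≤ (1 - p) ^ ((n : ℝ) / 2) ∧
          ∀ j : {j : Fin n // ¬ j ∈ S}, signVec (g j) ∈ spanOn S f)
  have e1 : {B : Fin n → Fin n → Bool //
        rho (spanOn S fun j => B j.1) ≤ (1 - p) ^ ((n : ℝ) / 2) ∧
        ∀ j : {j // ¬ j ∈ S}, signVec (B j.1) ∈ spanOn S fun i => B i.1}
      ≃ {x : ({j // j ∈ S} → (Fin n → Bool)) × ({j : Fin n // ¬ j ∈ S} → (Fin n → Bool)) //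
        (rho (spanOn S x.1) ≤ (1 - p) ^ ((n : ℝ) / 2) ∧
          ∀ j : {j : Fin n // ¬ j ∈ S}, signVec (x.2 j) ∈ spanOn S x.1)} :=
    (Equiv.piEquivPiSubtypeProd (fun j => j ∈ S) fun _ => (Fin n → Bool)).subtypeEquiv
      (fun B => Iff.rfl)
  rw [Nat.card_congr (e1.trans e0), Nat.card_eq_fintype_card, Fintype.card_sigma]
  push_cast
  have hcard : ∀ f : ({j // j ∈ S} → (Fin n → Bool)),
      (Fintype.card {g : ({j : Fin n // ¬ j ∈ S} → (Fin n → Bool)) //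
          rho (spanOn S f) ≤ (1 - p) ^ ((n : ℝ) / 2) ∧
          ∀ j : {j : Fin n // ¬ j ∈ S}, signVec (g j) ∈ spanOn S f} : ℝ)
        ≤ ((1 - p) ^ ((n : ℝ) / 2) * 2 ^ n) ^ k := by
    intro f
    by_cases hQ : rho (spanOn S f) ≤ (1 - p) ^ ((n : ℝ) / 2)
    · have e2 : {g : ({j : Fin n // ¬ j ∈ S} → (Fin n → Bool)) //
            rho (spanOn S f) ≤ (1 - p) ^ ((n : ℝ) / 2) ∧
            ∀ j : {j : Fin n // ¬ j ∈ S}, signVec (g j) ∈ spanOn S f}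
          ≃ ∀ _j : {j : Fin n // ¬ j ∈ S}, {x : Fin n → Bool // signVec x ∈ spanOn S f} :=
        (Equiv.subtypeEquivRight (fun g => and_iff_right hQ)).trans
          (Equiv.subtypePiEquivPi
            (β := fun _ : {j : Fin n // ¬ j ∈ S} => Fin n → Bool)
            (p := fun _ x => signVec x ∈ spanOn S f))
      rw [Fintype.card_congr e2, Fintype.card_pi]
      have hm : (Fintype.card {x : Fin n → Bool // signVec x ∈ spanOn S f} : ℝ)
          ≤ (1 - p) ^ ((n : ℝ) / 2) * 2 ^ n := by
        rw [rho, Nat.card_eq_fintype_card] at hQ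
        have h2 : (0:ℝ) < 2 ^ n := by positivity
        rw [div_le_iff₀ h2] at hQ
        convert hQ using 3
      rw [Finset.prod_const, Finset.card_univ, hcardC]
      push_cast
      exact pow_le_pow_left₀ (by positivity) hm k
    · have hz : Fintype.card {g : ({j : Fin n // ¬ j ∈ S} → (Fin n → Bool)) //
            rho (spanOn S f) ≤ (1 - p) ^ ((n : ℝ) / 2) ∧
            ∀ j : {j : Fin n // ¬ j ∈ S}, signVec (g j) ∈ spanOn S f} = 0 := by
        rw [Fintype.card_eq_zero_iff]
        exact ⟨fun g => hQ g.2.1⟩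
      rw [hz]
      exact_mod_cast hMnonneg
  calc (∑ f : ({j // j ∈ S} → (Fin n → Bool)),
        (Fintype.card {g : ({j : Fin n // ¬ j ∈ S} → (Fin n → Bool)) //
          rho (spanOn S f) ≤ (1 - p) ^ ((n : ℝ) / 2) ∧
          ∀ j : {j : Fin n // ¬ j ∈ S}, signVec (g j) ∈ spanOn S f} : ℝ))
      ≤ ∑ _f : ({j // j ∈ S} → (Fin n → Bool)), ((1 - p) ^ ((n : ℝ) / 2) * 2 ^ n) ^ k :=
        Finset.sum_le_sum fun f _ => hcard f
    _ = (Fintype.card ({j // j ∈ S} → (Fin n → Bool)) : ℝ) *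
          ((1 - p) ^ ((n : ℝ) / 2) * 2 ^ n) ^ k := by
        rw [Finset.sum_const, Finset.card_univ, nsmul_eq_mul]
    _ = 2 ^ (n * (n - k)) * ((1 - p) ^ ((n : ℝ) / 2) * 2 ^ n) ^ k := by
        have hA : Fintype.card ({j // j ∈ S} → (Fin n → Bool)) = 2 ^ (n * (n - k)) := by
          rw [Fintype.card_fun]
          simp only [Fintype.card_fun, Fintype.card_bool, Fintype.card_fin]
          rw [hcardS, ← pow_mul, Nat.mul_comm]
        rw [hA]; push_cast; ring

theorem thin_subspaces (n k : ℕ) (hk : 1 ≤ k) (hkn : k ≤ n)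
    (p : ℝ) (hp : 0 < p) (hp' : p < 1/2) :
    (Nat.card {B : Fin n → Fin n → Bool //
        Module.finrank ℚ (Submodule.span ℚ (Set.range fun j => signVec (B j))) = n - k ∧
        rho (Submodule.span ℚ (Set.range fun j => signVec (B j))) ≤
          (1 - p) ^ ((n : ℝ) / 2)} : ℝ) / 2 ^ (n * n)
      ≤ 2 ^ n * (1 - p) ^ ((n : ℝ) * k / 2) := by
  classical
  have hp1 : 0 ≤ 1 - p := by linarith
  set F := Finset.powersetCard (n - k) (Finset.univ : Finset (Fin n)) with hF
  -- Step 1: covering bound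
  have hcover : Nat.card {B : Fin n → Fin n → Bool //
        Module.finrank ℚ (Submodule.span ℚ (Set.range fun j => signVec (B j))) = n - k ∧
        rho (Submodule.span ℚ (Set.range fun j => signVec (B j))) ≤
          (1 - p) ^ ((n : ℝ) / 2)}
      ≤ ∑ S ∈ F, Nat.card {B : Fin n → Fin n → Bool //
          rho (spanOn S fun j => B j.1) ≤ (1 - p) ^ ((n : ℝ) / 2) ∧
          ∀ j : {j // ¬ j ∈ S}, signVec (B j.1) ∈ spanOn S fun i => B i.1} := by
    apply natCard_le_sum
    intro B hB
    obtain ⟨hrank, hrho⟩ := hB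
    obtain ⟨S, hScard, hSspan⟩ := exists_spanning_finset (fun j => signVec (B j))
    rw [hrank] at hScard
    have hVeq : spanOn S (fun j => B j.1) =
        Submodule.span ℚ (Set.range fun j => signVec (B j)) := by
      unfold spanOn
      exact (congrArg (Submodule.span ℚ)
        (Set.image_eq_range (fun j => signVec (B j)) (S : Set (Fin n)))).symm.trans hSspan
    refine ⟨S, ?_, ?_, ?_⟩
    · rw [hF, Finset.mem_powersetCard]
      exact ⟨Finset.subset_univ S, hScard⟩
    · rw [hVeq]; exact hrho
    · intro j
      rw [hVeq]
      exact Submodule.subset_span (Set.mem_range_self _)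
  -- Step 2: combine
  have hsum : (∑ S ∈ F, Nat.card {B : Fin n → Fin n → Bool //
          rho (spanOn S fun j => B j.1) ≤ (1 - p) ^ ((n : ℝ) / 2) ∧
          ∀ j : {j // ¬ j ∈ S}, signVec (B j.1) ∈ spanOn S fun i => B i.1} : ℝ)
      ≤ (F.card : ℝ) * (2 ^ (n * (n - k)) * ((1 - p) ^ ((n : ℝ) / 2) * 2 ^ n) ^ k) := by
    have : ∀ S ∈ F, (Nat.card {B : Fin n → Fin n → Bool //
          rho (spanOn S fun j => B j.1) ≤ (1 - p) ^ ((n : ℝ) / 2) ∧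
          ∀ j : {j // ¬ j ∈ S}, signVec (B j.1) ∈ spanOn S fun i => B i.1} : ℝ)
        ≤ 2 ^ (n * (n - k)) * ((1 - p) ^ ((n : ℝ) / 2) * 2 ^ n) ^ k := by
      intro S hSF
      rw [hF, Finset.mem_powersetCard] at hSF
      exact countS n k hkn p hp1 S hSF.2
    calc (∑ S ∈ F, Nat.card {B : Fin n → Fin n → Bool //
          rho (spanOn S fun j => B j.1) ≤ (1 - p) ^ ((n : ℝ) / 2) ∧
          ∀ j : {j // ¬ j ∈ S}, signVec (B j.1) ∈ spanOn S fun i => B i.1} : ℝ)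
        = ∑ S ∈ F, (Nat.card {B : Fin n → Fin n → Bool //
          rho (spanOn S fun j => B j.1) ≤ (1 - p) ^ ((n : ℝ) / 2) ∧
          ∀ j : {j // ¬ j ∈ S}, signVec (B j.1) ∈ spanOn S fun i => B i.1} : ℝ) := by
          push_cast; ring
      _ ≤ ∑ _S ∈ F, (2 ^ (n * (n - k)) * ((1 - p) ^ ((n : ℝ) / 2) * 2 ^ n) ^ k) :=
          Finset.sum_le_sum this
      _ = (F.card : ℝ) * (2 ^ (n * (n - k)) * ((1 - p) ^ ((n : ℝ) / 2) * 2 ^ n) ^ k) := by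
          rw [Finset.sum_const, nsmul_eq_mul]
  have hchoose : (F.card : ℝ) ≤ 2 ^ n := by
    rw [hF, Finset.card_powersetCard, Finset.card_univ, Fintype.card_fin]
    have h1 : n.choose (n - k) ≤ 2 ^ n := by
      have hmem : n - k ∈ Finset.range (n + 1) := Finset.mem_range.2 (Nat.lt_succ_of_le (Nat.sub_le n k))
      rw [← Nat.sum_range_choose n]
      exact Finset.single_le_sum (f := fun i => n.choose i) (fun i _ => Nat.zero_le _) hmem
    exact_mod_cast h1
  have hbound : (Nat.card {B : Fin n → Fin n → Bool //
        Module.finrank ℚ (Submodule.span ℚ (Set.range fun j => signVec (B j))) = n - k ∧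
        rho (Submodule.span ℚ (Set.range fun j => signVec (B j))) ≤
          (1 - p) ^ ((n : ℝ) / 2)} : ℝ)
      ≤ 2 ^ n * (2 ^ (n * (n - k)) * ((1 - p) ^ ((n : ℝ) / 2) * 2 ^ n) ^ k) := by
    have hM : (0:ℝ) ≤ 2 ^ (n * (n - k)) * ((1 - p) ^ ((n : ℝ) / 2) * 2 ^ n) ^ k := by
      positivity
    calc (Nat.card {B : Fin n → Fin n → Bool //
        Module.finrank ℚ (Submodule.span ℚ (Set.range fun j => signVec (B j))) = n - k ∧
        rho (Submodule.span ℚ (Set.range fun j => signVec (B j))) ≤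
          (1 - p) ^ ((n : ℝ) / 2)} : ℝ)
        ≤ (∑ S ∈ F, Nat.card {B : Fin n → Fin n → Bool //
          rho (spanOn S fun j => B j.1) ≤ (1 - p) ^ ((n : ℝ) / 2) ∧
          ∀ j : {j // ¬ j ∈ S}, signVec (B j.1) ∈ spanOn S fun i => B i.1} : ℝ) := by
          exact_mod_cast hcover
      _ ≤ (F.card : ℝ) * (2 ^ (n * (n - k)) * ((1 - p) ^ ((n : ℝ) / 2) * 2 ^ n) ^ k) := hsum
      _ ≤ 2 ^ n * (2 ^ (n * (n - k)) * ((1 - p) ^ ((n : ℝ) / 2) * 2 ^ n) ^ k) :=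
          mul_le_mul_of_nonneg_right hchoose hM
  have hpow2 : (0:ℝ) < 2 ^ (n * n) := by positivity
  rw [div_le_iff₀ hpow2]
  refine hbound.trans_eq ?_
  have key : ((1 - p) ^ ((n : ℝ) / 2) * 2 ^ n : ℝ) ^ k
      = (1 - p) ^ ((n : ℝ) * k / 2) * 2 ^ (n * k) := by
    rw [mul_pow, ← Real.rpow_natCast ((1 - p) ^ ((n : ℝ) / 2)) k, ← Real.rpow_mul hp1,
      ← pow_mul]
    congr 1
    ring_nf
  rw [key]
  have hexp : n * (n - k) + n * k = n * n := by
    rw [← Nat.mul_add, Nat.sub_add_cancel hkn]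
  have h2 : (2:ℝ) ^ (n * (n - k)) * 2 ^ (n * k) = 2 ^ (n * n) := by
    rw [← pow_add, hexp]
  calc (2:ℝ) ^ n * (2 ^ (n * (n - k)) * ((1 - p) ^ ((n : ℝ) * k / 2) * 2 ^ (n * k)))
      = 2 ^ n * (1 - p) ^ ((n : ℝ) * k / 2) * (2 ^ (n * (n - k)) * 2 ^ (n * k)) := by ring
    _ = 2 ^ n * (1 - p) ^ ((n : ℝ) * k / 2) * 2 ^ (n * n) := by rw [h2]
end
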